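/- Let E be a finite-dimensional real inner product space, n ≥ 1, and ω₁, …, ωₙ : E → E l-Lipschitz maps whose average ν = (1/n)·Σᵢ ωᵢ is μ-strongly monotone with 0 < μ ≤ l; let z* be the unique root of ν and σ*² = (1/n)·Σᵢ ‖ωᵢ(z*)‖². Fix z₀ ∈ E, K ≥ 1, and 0 < α ≤ μ/(5nl²). For each single permutation τ of {1,…,n}, let z^{K+1}₀(τ) denote the GDA-without-replacement output after K epochs started at z₀, where the same permutation τ is used in every epoch (Shuffle Once). Then, averaging over all n! permutations, (1/n!)·Σ_τ ‖z^{K+1}₀(τ) − z*‖² ≤ 2·e^{−nαμK}·‖z₀ − z*‖² + l²σ*²α³n²K/μ. -/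

import Mathlib

open scoped RealInnerProductSpace

/-- Iterates within one epoch of GDA without replacement: starting from `z`, perform
`i` steps `z ↦ z − α·ω_{τ(j)}(z)` for `j = 1, …, i` (indices via `Fin n`). -/
noncomputable def gdaStep {E : Type*} [NormedAddCommGroup E] [NormedSpace ℝ E] {n : ℕ}
    (ω : Fin n → E → E) (α : ℝ) (τ : Equiv.Perm (Fin n)) (z : E) : ℕ → E
  | 0 => z
  | i + 1 =>
    let w := gdaStep ω α τ z i
    if h : i < n then w - α • ω (τ ⟨i, h⟩) w else w

/-- Epoch iterates of GDA without replacement: `gdaEpochs ω α τs z₀ k` is the iterate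
`z^{k+1}₀` after `k` full epochs, epoch `j` using the permutation `τs j`. -/
noncomputable def gdaEpochs {E : Type*} [NormedAddCommGroup E] [NormedSpace ℝ E] {n : ℕ}
    (ω : Fin n → E → E) (α : ℝ) (τs : ℕ → Equiv.Perm (Fin n)) (z0 : E) : ℕ → E
  | 0 => z0
  | k + 1 => gdaStep ω α (τs k) (gdaEpochs ω α τs z0 k) n

open Finset
set_option maxHeartbeats 4000000


private lemma perm_reindex {n : ℕ} {M : Type*} [AddCommMonoid M]
    (F : Equiv.Perm (Fin n) → M) (π : Equiv.Perm (Fin n)) :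
    ∑ τ : Equiv.Perm (Fin n), F (τ * π) = ∑ τ : Equiv.Perm (Fin n), F τ :=
  Fintype.sum_bijective (· * π) (Group.mulRight_bijective π) _ _ (fun _ => rfl)

private lemma perm_single {n : ℕ} (f : Fin n → ℝ) (j : Fin n) :
    (n : ℝ) * ∑ τ : Equiv.Perm (Fin n), f (τ j) = (n.factorial : ℝ) * ∑ i, f i := by
  have key : ∀ j' : Fin n, ∑ τ : Equiv.Perm (Fin n), f (τ j') = ∑ τ : Equiv.Perm (Fin n), f (τ j) := by
    intro j'
    have h := perm_reindex (fun τ => f (τ j')) (Equiv.swap j' j)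
    simpa [Equiv.Perm.mul_apply, Equiv.swap_apply_left] using h.symm
  have h1 : (n : ℝ) * ∑ τ : Equiv.Perm (Fin n), f (τ j)
      = ∑ j' : Fin n, ∑ τ : Equiv.Perm (Fin n), f (τ j') := by
    rw [Finset.sum_congr rfl (fun j' _ => key j')]
    simp [Finset.card_univ, mul_comm]
  rw [h1, Finset.sum_comm]
  have h2 : ∀ τ : Equiv.Perm (Fin n), ∑ j' : Fin n, f (τ j') = ∑ i, f i :=
    fun τ => Equiv.sum_comp τ f
  rw [Finset.sum_congr rfl (fun τ _ => h2 τ)]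
  simp [Finset.card_univ, Fintype.card_perm, mul_comm]

private lemma perm_pair {n : ℕ} (g : Fin n → Fin n → ℝ) {j j' : Fin n} (hjj : j ≠ j') :
    ((n : ℝ) * ((n : ℝ) - 1)) * ∑ τ : Equiv.Perm (Fin n), g (τ j) (τ j')
      = (n.factorial : ℝ) * ∑ q ∈ (Finset.univ : Finset (Fin n)).offDiag, g q.1 q.2 := by
  have key : ∀ k k' : Fin n, k ≠ k' →
      ∑ τ : Equiv.Perm (Fin n), g (τ k) (τ k') = ∑ τ : Equiv.Perm (Fin n), g (τ j) (τ j') := by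
    intro k k' hkk
    set π₁ := Equiv.swap j k with hπ₁
    set m := π₁ j' with hm
    have hkm : k ≠ m := by
      intro h
      apply hjj
      have : π₁ j' = π₁ j := by
        rw [← hm, ← h, hπ₁, Equiv.swap_apply_left]
      exact (π₁.injective this).symm
    set π := Equiv.swap m k' * π₁ with hπ
    have hπj : π j = k := by
      rw [hπ, Equiv.Perm.mul_apply, hπ₁, Equiv.swap_apply_left]
      exact Equiv.swap_apply_of_ne_of_ne hkm hkk
    have hπj' : π j' = k' := by
      rw [hπ, Equiv.Perm.mul_apply, ← hm, Equiv.swap_apply_left]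
    have h := perm_reindex (fun τ => g (τ j) (τ j')) π
    simp only [Equiv.Perm.mul_apply] at h
    rw [hπj, hπj'] at h
    exact h
  have card_off : ((Finset.univ : Finset (Fin n)).offDiag.card : ℝ) = (n : ℝ) * ((n : ℝ) - 1) := by
    rw [Finset.offDiag_card]
    rcases n with _ | m
    · simp
    · push_cast [Finset.card_univ, Fintype.card_fin, Nat.succ_sub_one]
      rw [Nat.cast_sub (Nat.le_mul_of_pos_left _ (Nat.succ_pos m))]
      push_cast
      ring
  have h1 : ∑ q ∈ (Finset.univ : Finset (Fin n)).offDiag,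
        (∑ τ : Equiv.Perm (Fin n), g (τ q.1) (τ q.2))
      = ((Finset.univ : Finset (Fin n)).offDiag.card : ℝ)
          * ∑ τ : Equiv.Perm (Fin n), g (τ j) (τ j') := by
    rw [Finset.sum_congr rfl (fun q hq => key q.1 q.2 (Finset.mem_offDiag.mp hq).2.2)]
    simp [mul_comm]
  have h2 : ∑ q ∈ (Finset.univ : Finset (Fin n)).offDiag,
        (∑ τ : Equiv.Perm (Fin n), g (τ q.1) (τ q.2))
      = (n.factorial : ℝ) * ∑ q ∈ (Finset.univ : Finset (Fin n)).offDiag, g q.1 q.2 := by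
    rw [Finset.sum_comm]
    have inner : ∀ τ : Equiv.Perm (Fin n),
        ∑ q ∈ (Finset.univ : Finset (Fin n)).offDiag, g (τ q.1) (τ q.2)
          = ∑ q ∈ (Finset.univ : Finset (Fin n)).offDiag, g q.1 q.2 := by
      intro τ
      apply Finset.sum_nbij' (fun q => (τ q.1, τ q.2)) (fun q => (τ⁻¹ q.1, τ⁻¹ q.2))
      · intro q hq
        simp only [Finset.mem_offDiag] at hq ⊢
        exact ⟨Finset.mem_univ _, Finset.mem_univ _, fun h => hq.2.2 (τ.injective h)⟩
      · intro q hq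
        simp only [Finset.mem_offDiag] at hq ⊢
        exact ⟨Finset.mem_univ _, Finset.mem_univ _, fun h => hq.2.2 (τ⁻¹.injective h)⟩
      · intro q _; simp
      · intro q _; simp
      · intro q _; rfl
    rw [Finset.sum_congr rfl (fun τ _ => inner τ)]
    simp [Finset.card_univ, Fintype.card_perm, mul_comm]
  rw [← card_off, ← h1, h2]

private lemma sum_range_cast (n : ℕ) :
    ∑ p ∈ Finset.range n, (p : ℝ) = n * (n - 1) / 2 := by
  induction n with
  | zero => simp
  | succ m ih => rw [Finset.sum_range_succ, ih]; push_cast; ring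

private lemma sum_range_sq_cast (n : ℕ) :
    ∑ p ∈ Finset.range n, (p : ℝ) ^ 2 = n * (n - 1) * (2 * n - 1) / 6 := by
  induction n with
  | zero => simp
  | succ m ih => rw [Finset.sum_range_succ, ih]; push_cast; ring

private lemma card_filter_lt {n p : ℕ} (hp : p ≤ n) :
    ((Finset.univ : Finset (Fin n)).filter fun j : Fin n => (j : ℕ) < p).card = p := by
  have he : ((Finset.univ : Finset (Fin n)).filter fun j : Fin n => (j : ℕ) < p)
      = (Finset.range p).attachFin (fun m hm => lt_of_lt_of_le (Finset.mem_range.mp hm) hp) := by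
    ext j
    simp [Finset.mem_attachFin]
  rw [he, Finset.card_attachFin, Finset.card_range]

private lemma norm_sq_sum_split {E : Type*} [NormedAddCommGroup E] [InnerProductSpace ℝ E]
    {ι : Type*} [DecidableEq ι] (A : Finset ι) (v : ι → E) :
    ‖∑ j ∈ A, v j‖ ^ 2 = ∑ j ∈ A, ‖v j‖ ^ 2 + ∑ q ∈ A.offDiag, ⟪v q.1, v q.2⟫ := by
  rw [← real_inner_self_eq_norm_sq, sum_inner]
  have h1 : ∀ j ∈ A, ⟪v j, ∑ j' ∈ A, v j'⟫ = ∑ j' ∈ A, ⟪v j, v j'⟫ :=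
    fun j _ => inner_sum A v (v j)
  rw [Finset.sum_congr rfl h1, ← Finset.sum_product', ← Finset.diag_union_offDiag,
    Finset.sum_union (Finset.disjoint_diag_offDiag A), Finset.sum_diag]
  congr 1
  exact Finset.sum_congr rfl fun j _ => real_inner_self_eq_norm_sq (v j)

private lemma perm_prefix {E : Type*} [NormedAddCommGroup E] [InnerProductSpace ℝ E]
    {n : ℕ} (y : Fin n → E) (hy : ∑ i, y i = 0) :
    ∑ τ : Equiv.Perm (Fin n), ∑ p ∈ Finset.range n,
        ‖∑ j ∈ (Finset.univ : Finset (Fin n)).filter (fun j : Fin n => (j : ℕ) < p), y (τ j)‖ ^ 2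
      ≤ (n.factorial : ℝ) * ((∑ i, ‖y i‖ ^ 2) * n / 4) := by
  set M : ℝ := ∑ i, ‖y i‖ ^ 2 with hM
  have hM0 : 0 ≤ M := Finset.sum_nonneg fun i _ => by positivity
  have hF0 : (0:ℝ) < (n.factorial : ℝ) := by exact_mod_cast n.factorial_pos
  rcases lt_or_ge n 2 with hn2 | hn2
  · have hz : ∀ (τ : Equiv.Perm (Fin n)), ∑ p ∈ Finset.range n,
        ‖∑ j ∈ (Finset.univ : Finset (Fin n)).filter (fun j : Fin n => (j : ℕ) < p), y (τ j)‖ ^ 2 = 0 := by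
      intro τ
      apply Finset.sum_eq_zero
      intro p hp
      have hp0 : p = 0 := by have := Finset.mem_range.mp hp; omega
      subst hp0
      simp
    rw [Finset.sum_congr rfl (fun τ _ => hz τ)]
    simp only [Finset.sum_const, smul_zero]
    positivity
  · have hN2 : (2:ℝ) ≤ (n:ℝ) := by exact_mod_cast hn2
    have hN0 : (n:ℝ) ≠ 0 := by linarith
    have hN1 : (n:ℝ) - 1 ≠ 0 := by linarith
    -- value of single sums
    have h1 : ∀ j : Fin n, ∑ τ : Equiv.Perm (Fin n), ‖y (τ j)‖ ^ 2
        = (n.factorial : ℝ) * M / n := by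
      intro j
      have h := perm_single (fun i => ‖y i‖ ^ 2) j
      field_simp
      linarith [h]
    -- total off-diagonal correlation
    have hC : ∑ q ∈ (Finset.univ : Finset (Fin n)).offDiag, ⟪y q.1, y q.2⟫ = -M := by
      have h0 := norm_sq_sum_split (Finset.univ : Finset (Fin n)) y
      rw [hy] at h0
      simp only [norm_zero] at h0
      have : (0:ℝ) ^ 2 = 0 := by norm_num
      rw [this] at h0
      linarith [h0]
    have h2 : ∀ q : Fin n × Fin n, q.1 ≠ q.2 →
        ∑ τ : Equiv.Perm (Fin n), ⟪y (τ q.1), y (τ q.2)⟫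
          = (n.factorial : ℝ) * (-M) / ((n:ℝ) * ((n:ℝ) - 1)) := by
      intro q hq
      have h := perm_pair (fun a b => ⟪y a, y b⟫) hq
      rw [hC] at h
      field_simp
      nlinarith [h]
    rw [Finset.sum_comm]
    have hper : ∀ p ∈ Finset.range n,
        ∑ τ : Equiv.Perm (Fin n),
          ‖∑ j ∈ (Finset.univ : Finset (Fin n)).filter (fun j : Fin n => (j : ℕ) < p), y (τ j)‖ ^ 2
        = (p:ℝ) * ((n.factorial : ℝ) * M / n)
          + ((p:ℝ) * (p:ℝ) - p) * ((n.factorial : ℝ) * (-M) / ((n:ℝ) * ((n:ℝ) - 1))) := by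
      intro p hp
      have hpn : p ≤ n := le_of_lt (Finset.mem_range.mp hp)
      set A := (Finset.univ : Finset (Fin n)).filter (fun j : Fin n => (j : ℕ) < p) with hA
      have hcard : (A.card : ℝ) = p := by rw [hA, card_filter_lt hpn]
      have hcardoff : (A.offDiag.card : ℝ) = (p:ℝ) * (p:ℝ) - p := by
        rw [Finset.offDiag_card, card_filter_lt hpn]
        have hle : p ≤ p * p := by
          rcases Nat.eq_zero_or_pos p with h | h
          · simp [h]
          · exact Nat.le_mul_of_pos_left _ h
        rw [Nat.cast_sub hle]
        push_cast
        ring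
      calc ∑ τ : Equiv.Perm (Fin n), ‖∑ j ∈ A, y (τ j)‖ ^ 2
          = ∑ τ : Equiv.Perm (Fin n), (∑ j ∈ A, ‖y (τ j)‖ ^ 2
              + ∑ q ∈ A.offDiag, ⟪y (τ q.1), y (τ q.2)⟫) :=
            Finset.sum_congr rfl fun τ _ => norm_sq_sum_split A (fun j => y (τ j))
        _ = (∑ j ∈ A, ∑ τ : Equiv.Perm (Fin n), ‖y (τ j)‖ ^ 2)
              + ∑ q ∈ A.offDiag, ∑ τ : Equiv.Perm (Fin n), ⟪y (τ q.1), y (τ q.2)⟫ := by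
            rw [Finset.sum_add_distrib, Finset.sum_comm (s := Finset.univ) (t := A)]
            congr 1
            exact Finset.sum_comm
        _ = (p:ℝ) * ((n.factorial : ℝ) * M / n)
              + ((p:ℝ) * (p:ℝ) - p) * ((n.factorial : ℝ) * (-M) / ((n:ℝ) * ((n:ℝ) - 1))) := by
            rw [Finset.sum_congr rfl (fun j _ => h1 j),
              Finset.sum_congr rfl (fun q hq => h2 q (Finset.mem_offDiag.mp hq).2.2)]
            simp only [Finset.sum_const, nsmul_eq_mul]
            rw [hcard, hcardoff]
    rw [Finset.sum_congr rfl hper]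
    rw [Finset.sum_add_distrib, ← Finset.sum_mul, ← Finset.sum_mul]
    have hs1 := sum_range_cast n
    have hs2 : ∑ p ∈ Finset.range n, ((p:ℝ) * (p:ℝ) - p)
        = (n:ℝ) * ((n:ℝ) - 1) * (2 * (n:ℝ) - 1) / 6 - (n:ℝ) * ((n:ℝ) - 1) / 2 := by
      rw [Finset.sum_sub_distrib]
      have := sum_range_sq_cast n
      rw [sum_range_cast n]
      have h' : ∑ p ∈ Finset.range n, (p:ℝ) * (p:ℝ) = (n:ℝ) * ((n:ℝ)-1) * (2*(n:ℝ)-1)/6 := by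
        rw [← this]; exact Finset.sum_congr rfl fun p _ => by ring
      rw [h']
    rw [hs1, hs2]
    -- now pure arithmetic
    have key : (n:ℝ) * ((n:ℝ) - 1) / 2 * ((n.factorial : ℝ) * M / n)
        + ((n:ℝ) * ((n:ℝ) - 1) * (2 * (n:ℝ) - 1) / 6 - (n:ℝ) * ((n:ℝ) - 1) / 2)
            * ((n.factorial : ℝ) * (-M) / ((n:ℝ) * ((n:ℝ) - 1)))
        = (n.factorial : ℝ) * M * ((n:ℝ) + 1) / 6 := by
      field_simp
      ring
    rw [key]
    have : ((n:ℝ) + 1) / 6 ≤ (n:ℝ) / 4 := by linarith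
    calc (n.factorial : ℝ) * M * ((n:ℝ) + 1) / 6
        = (n.factorial : ℝ) * M * (((n:ℝ) + 1) / 6) := by ring
      _ ≤ (n.factorial : ℝ) * M * ((n:ℝ) / 4) := by
          apply mul_le_mul_of_nonneg_left this (by positivity)
      _ = (n.factorial : ℝ) * (M * n / 4) := by ring

private lemma sq_le_imp {a b : ℝ} (ha : 0 ≤ a) (hb : 0 ≤ b) (h : a ^ 2 ≤ b ^ 2) : a ≤ b := by
  nlinarith

private lemma sq_step {L D B x Y : ℝ} (hx0 : 0 < x) (hx5 : x ≤ 1/5)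
    (hD0 : 0 ≤ D) (hB0 : 0 ≤ B) (hL0 : 0 ≤ L)
    (h : L ≤ (1 - (31/40) * x) * D + B) (hBY : B ^ 2 ≤ Y) :
    L ^ 2 ≤ (1 - x) * D ^ 2 + (1 + 1 / ((17/40) * x)) * Y := by
  have hcx : 0 < (17/40) * x := by linarith
  have hcxne : (17/40) * x ≠ 0 := ne_of_gt hcx
  have young : 2 * (D * B) ≤ (17/40) * x * D ^ 2 + B ^ 2 / ((17/40) * x) := by
    rw [← sub_nonneg]
    have e1 : (17/40) * x * D ^ 2 + B ^ 2 / ((17/40) * x) - 2 * (D * B)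
        = ((17/40) * x * D - B) ^ 2 / ((17/40) * x) := by
      field_simp
      ring
    rw [e1]
    positivity
  have hcontr : (1 - (31/40) * x) ^ 2 + (17/40) * x ≤ 1 - x := by nlinarith [hx0, hx5]
  have h1 : L ^ 2 ≤ ((1 - (31/40) * x) * D + B) ^ 2 := by
    have hrhs : 0 ≤ (1 - (31/40) * x) * D + B := by
      have : 0 ≤ (1 - (31/40) * x) * D := mul_nonneg (by linarith) hD0
      linarith
    nlinarith [h, hL0, hrhs]
  have h2 : (1 - (31/40) * x) * (D * B) ≤ 1 * (D * B) := by
    have hDB : 0 ≤ D * B := mul_nonneg hD0 hB0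
    nlinarith [hx0]
  have h3' : ((1 - (31/40) * x) ^ 2 + (17/40) * x) * D ^ 2 ≤ (1 - x) * D ^ 2 :=
    mul_le_mul_of_nonneg_right hcontr (sq_nonneg D)
  have hBB : B ^ 2 / ((17/40) * x) = (1 / ((17/40) * x)) * B ^ 2 := by ring
  have hcoef : (0:ℝ) ≤ 1 + 1 / ((17/40) * x) := by
    have := one_div_pos.mpr hcx
    linarith
  have hY := mul_le_mul_of_nonneg_left hBY hcoef
  nlinarith [h1, h2, h3', young, hY]

private lemma epoch_bound {E : Type*} [NormedAddCommGroup E] [InnerProductSpace ℝ E]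
    {n : ℕ} (hn : 1 ≤ n) (ω : Fin n → E → E) {l μ α : ℝ}
    (hμ : 0 < μ) (hμl : μ ≤ l)
    (hlip : ∀ (i : Fin n) (z₁ z₂ : E), ‖ω i z₁ - ω i z₂‖ ≤ l * ‖z₁ - z₂‖)
    (ν : E → E) (hν : ∀ z, ν z = (n : ℝ)⁻¹ • ∑ i, ω i z)
    (hmono : ∀ z₁ z₂, ⟪ν z₁ - ν z₂, z₁ - z₂⟫ ≥ μ * ‖z₁ - z₂‖ ^ 2)
    (zs : E) (hzs : ν zs = 0)
    (hα0 : 0 < α) (hα : α ≤ μ / (5 * n * l ^ 2))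
    (τ : Equiv.Perm (Fin n)) (w : E) :
    ‖gdaStep ω α τ w n - zs‖ ^ 2
      ≤ (1 - (n : ℝ) * α * μ) * ‖w - zs‖ ^ 2
        + (1 + 1 / ((17/40) * ((n : ℝ) * α * μ))) * (25/16) * α ^ 4 * l ^ 2 * n *
            ∑ p ∈ Finset.range n, ‖∑ t ∈ Finset.range p,
              (if h : t < n then ω (τ ⟨t, h⟩) zs else 0)‖ ^ 2 := by
  have hl0 : 0 < l := lt_of_lt_of_le hμ hμl
  have hn0 : (0:ℝ) < (n:ℝ) := by exact_mod_cast hn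
  set x : ℝ := (n : ℝ) * α * μ with hxdef
  clear_value x
  have hx0 : 0 < x := by rw [hxdef]; positivity
  have hanl2 : α * ((n:ℝ) * l ^ 2) ≤ μ / 5 := by
    rw [le_div_iff₀ (by positivity)] at hα
    linarith [hα]
  have hx5 : x ≤ 1/5 := by
    rw [hxdef]
    have h1 : α * ((n:ℝ) * l ^ 2) * μ ≤ μ / 5 * μ := mul_le_mul_of_nonneg_right hanl2 hμ.le
    have h2 : μ * μ ≤ l * l := mul_le_mul hμl hμl hμ.le (le_of_lt hl0)
    nlinarith [h1, h2, mul_pos hl0 hl0]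
  have haln : α * l * (n:ℝ) ≤ 1/5 := by nlinarith [hanl2, hμl, hl0]
  have hsq5 : (n:ℝ) * (n:ℝ) * α * α * l * l ≤ x / 5 := by
    rw [hxdef]
    have h := mul_le_mul_of_nonneg_right hanl2 (by positivity : (0:ℝ) ≤ α * (n:ℝ))
    nlinarith [h]
  set ωd : ℕ → E → E := fun t z => if h : t < n then ω (τ ⟨t, h⟩) z else 0 with hωd
  set Z : ℕ → E := gdaStep ω α τ w with hZ
  have hlipd : ∀ t, t < n → ∀ z₁ z₂ : E, ‖ωd t z₁ - ωd t z₂‖ ≤ l * ‖z₁ - z₂‖ := by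
    intro t ht z₁ z₂
    simp only [hωd, dif_pos ht]
    exact hlip _ _ _
  -- prefix identity
  have hid : ∀ i, i ≤ n → Z i = w - α • ∑ t ∈ Finset.range i, ωd t (Z t) := by
    intro i
    induction i with
    | zero => intro _; simp [hZ, gdaStep]
    | succ i ih =>
      intro hi1
      have hi : i < n := hi1
      have hz : Z (i + 1) = Z i - α • ω (τ ⟨i, hi⟩) (Z i) := by
        rw [hZ]
        show gdaStep ω α τ w (i + 1) = _
        rw [gdaStep]
        simp [hi]
      rw [Finset.sum_range_succ, hz, ih (le_of_lt hi)]
      have hd : ωd i (w - α • ∑ t ∈ Finset.range i, ωd t (Z t))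
          = ω (τ ⟨i, hi⟩) (w - α • ∑ t ∈ Finset.range i, ωd t (Z t)) := by
        simp only [hωd, dif_pos hi]
      rw [hd, smul_add]
      abel
  set D : ℝ := ‖w - zs‖ with hD
  have hD0 : 0 ≤ D := norm_nonneg _
  set s : ℕ → ℝ := fun p => ‖∑ t ∈ Finset.range p, ωd t zs‖ with hs
  set e : ℕ → ℝ := fun j => ‖Z j - w‖ with he'
  set S : ℝ := ∑ p ∈ Finset.range n, s p with hS
  set T : ℝ := ∑ j ∈ Finset.range n, e j with hT'
  have hs0 : ∀ p, 0 ≤ s p := fun p => norm_nonneg _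
  have he0 : ∀ j, 0 ≤ e j := fun j => norm_nonneg _
  have hS0 : 0 ≤ S := Finset.sum_nonneg fun p _ => hs0 p
  have hT0 : 0 ≤ T := Finset.sum_nonneg fun j _ => he0 j
  -- per-step norm bound
  have he : ∀ j, j ≤ n → e j ≤ α * s j + α * l * ∑ t ∈ Finset.range j, (e t + D) := by
    intro j hj
    have hzj : Z j - w = -(α • ∑ t ∈ Finset.range j, ωd t (Z t)) := by
      rw [hid j hj]; abel
    have hsplit : ∑ t ∈ Finset.range j, ωd t (Z t)
        = (∑ t ∈ Finset.range j, ωd t zs) + ∑ t ∈ Finset.range j, (ωd t (Z t) - ωd t zs) := by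
      rw [← Finset.sum_add_distrib]
      exact Finset.sum_congr rfl fun t _ => by abel
    have hterm : ∀ t ∈ Finset.range j, ‖ωd t (Z t) - ωd t zs‖ ≤ l * (e t + D) := by
      intro t ht
      have htn : t < n := lt_of_lt_of_le (Finset.mem_range.mp ht) hj
      refine le_trans (hlipd t htn (Z t) zs) ?_
      have : ‖Z t - zs‖ ≤ e t + D := by
        have := norm_sub_le_norm_sub_add_norm_sub (Z t) w zs
        simpa [he', hD] using this
      nlinarith [norm_nonneg (Z t - zs)]
    have hnorm : ‖∑ t ∈ Finset.range j, ωd t (Z t)‖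
        ≤ s j + l * ∑ t ∈ Finset.range j, (e t + D) := by
      rw [hsplit]
      refine le_trans (norm_add_le _ _) ?_
      have h2 : ‖∑ t ∈ Finset.range j, (ωd t (Z t) - ωd t zs)‖
          ≤ ∑ t ∈ Finset.range j, l * (e t + D) :=
        le_trans (norm_sum_le _ _) (Finset.sum_le_sum hterm)
      rw [Finset.mul_sum]
      exact add_le_add le_rfl h2
    calc e j = ‖Z j - w‖ := rfl
      _ = α * ‖∑ t ∈ Finset.range j, ωd t (Z t)‖ := by
          rw [hzj, norm_neg, norm_smul, Real.norm_eq_abs, abs_of_pos hα0]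
      _ ≤ α * (s j + l * ∑ t ∈ Finset.range j, (e t + D)) := by
          exact mul_le_mul_of_nonneg_left hnorm (le_of_lt hα0)
      _ = α * s j + α * l * ∑ t ∈ Finset.range j, (e t + D) := by ring
  have hgauss := sum_range_cast n
  -- total drift bound
  have hTb : T ≤ (5/4) * (α * S + α * l * ((n:ℝ) * ((n:ℝ) - 1) / 2) * D) := by
    have hsum : T ≤ ∑ j ∈ Finset.range n, (α * s j + α * l * ∑ t ∈ Finset.range j, (e t + D)) := by
      apply Finset.sum_le_sum
      intro j hj
      exact he j (le_of_lt (Finset.mem_range.mp hj))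
    have h2 : ∑ j ∈ Finset.range n, (α * s j + α * l * ∑ t ∈ Finset.range j, (e t + D))
        = α * S + α * l * ∑ j ∈ Finset.range n, ∑ t ∈ Finset.range j, (e t + D) := by
      rw [Finset.sum_add_distrib, ← Finset.mul_sum, ← Finset.mul_sum]
    have hinner : ∀ j ∈ Finset.range n, ∑ t ∈ Finset.range j, (e t + D) ≤ T + (j:ℝ) * D := by
      intro j hj
      rw [Finset.sum_add_distrib, Finset.sum_const, Finset.card_range, nsmul_eq_mul]
      have hsub : ∑ t ∈ Finset.range j, e t ≤ T :=
        Finset.sum_le_sum_of_subset_of_nonneg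
          (Finset.range_subset_range.mpr (le_of_lt (Finset.mem_range.mp hj)))
          (fun t _ _ => he0 t)
      linarith
    have h3 : ∑ j ∈ Finset.range n, ∑ t ∈ Finset.range j, (e t + D)
        ≤ (n:ℝ) * T + ((n:ℝ) * ((n:ℝ) - 1) / 2) * D := by
      refine le_trans (Finset.sum_le_sum hinner) ?_
      rw [Finset.sum_add_distrib, Finset.sum_const, Finset.card_range, nsmul_eq_mul,
        ← Finset.sum_mul, hgauss]
    have h4 : α * l * (∑ j ∈ Finset.range n, ∑ t ∈ Finset.range j, (e t + D))
        ≤ α * l * ((n:ℝ) * T + ((n:ℝ) * ((n:ℝ) - 1) / 2) * D) :=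
      mul_le_mul_of_nonneg_left h3 (by positivity)
    have h5 : T ≤ α * S + α * l * ((n:ℝ) * T + ((n:ℝ) * ((n:ℝ) - 1) / 2) * D) := by
      rw [h2] at hsum
      linarith
    have hmul : α * l * (n:ℝ) * T ≤ (1/5) * T := by
      have := mul_le_mul_of_nonneg_right haln hT0
      linarith
    nlinarith [h5, hmul]
  -- decomposition at the end of the epoch
  set G : E := (w - zs) - ((n:ℝ) * α) • ν w with hG
  set r : E := α • ∑ t ∈ Finset.range n, (ωd t (Z t) - ωd t w) with hr
  have hsumw : ∑ t ∈ Finset.range n, ωd t w = ∑ i, ω i w := by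
    rw [← Fin.sum_univ_eq_sum_range (fun t => ωd t w) n]
    rw [← Equiv.sum_comp τ (fun i => ω i w)]
    apply Finset.sum_congr rfl
    intro i _
    simp only [hωd, dif_pos i.isLt, Fin.eta]
  have hνw : ((n:ℝ) * α) • ν w = α • ∑ t ∈ Finset.range n, ωd t w := by
    rw [hν w, hsumw, smul_smul]
    congr 1
    rw [mul_comm (n:ℝ) α, mul_assoc, mul_inv_cancel₀ (ne_of_gt hn0), mul_one]
  have hdecomp : Z n - zs = G - r := by
    rw [hid n le_rfl, hG, hr, hνw, Finset.sum_sub_distrib, smul_sub]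
    abel
  have hrb : ‖r‖ ≤ α * l * T := by
    rw [hr, norm_smul, Real.norm_eq_abs, abs_of_pos hα0]
    have h1 : ‖∑ t ∈ Finset.range n, (ωd t (Z t) - ωd t w)‖
        ≤ ∑ t ∈ Finset.range n, (l * e t) := by
      refine le_trans (norm_sum_le _ _) (Finset.sum_le_sum ?_)
      intro t ht
      exact hlipd t (Finset.mem_range.mp ht) (Z t) w
    rw [← Finset.mul_sum] at h1
    calc α * ‖∑ t ∈ Finset.range n, (ωd t (Z t) - ωd t w)‖ ≤ α * (l * T) :=
          mul_le_mul_of_nonneg_left h1 hα0.le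
      _ = α * l * T := by ring
  -- bound on ‖G‖
  have hνlip : ‖ν w‖ ≤ l * D := by
    have hhe : ν w - ν zs = (n:ℝ)⁻¹ • ∑ i, (ω i w - ω i zs) := by
      rw [hν w, hν zs, ← smul_sub, ← Finset.sum_sub_distrib]
    have h2 : ‖ν w - ν zs‖ ≤ (n:ℝ)⁻¹ * ((n:ℝ) * (l * D)) := by
      rw [hhe, norm_smul, Real.norm_eq_abs, abs_of_pos (by positivity : (0:ℝ) < (n:ℝ)⁻¹)]
      refine mul_le_mul_of_nonneg_left ?_ (by positivity)
      refine le_trans (norm_sum_le _ _) ?_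
      calc ∑ i, ‖ω i w - ω i zs‖ ≤ ∑ _i : Fin n, l * ‖w - zs‖ :=
            Finset.sum_le_sum (fun i _ => hlip i w zs)
        _ = (n:ℝ) * (l * D) := by
            rw [Finset.sum_const, Finset.card_univ, Fintype.card_fin, nsmul_eq_mul, hD]
    rw [hzs, sub_zero] at h2
    calc ‖ν w‖ ≤ (n:ℝ)⁻¹ * ((n:ℝ) * (l * D)) := h2
      _ = l * D := by field_simp
  have hinnerG : ⟪w - zs, ν w⟫ ≥ μ * D ^ 2 := by
    have hm := hmono w zs
    rw [hzs, sub_zero] at hm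
    rw [real_inner_comm]
    exact hm
  have hG2 : ‖G‖ ^ 2 ≤ (1 - (9/5) * x) * D ^ 2 := by
    have hexp := norm_sub_sq_real (w - zs) (((n:ℝ) * α) • ν w)
    rw [← hG] at hexp
    rw [real_inner_smul_right] at hexp
    have h1 : ‖((n:ℝ) * α) • ν w‖ = ((n:ℝ) * α) * ‖ν w‖ := by
      rw [norm_smul, Real.norm_eq_abs, abs_of_pos (by positivity)]
    rw [h1] at hexp
    have hIα : ((n:ℝ) * α) * (μ * D ^ 2) ≤ ((n:ℝ) * α) * ⟪w - zs, ν w⟫ :=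
      mul_le_mul_of_nonneg_left hinnerG (by positivity)
    have hν2 : (((n:ℝ) * α) * ‖ν w‖) ^ 2 ≤ (((n:ℝ) * α) * (l * D)) ^ 2 := by
      apply pow_le_pow_left₀ (by positivity)
      exact mul_le_mul_of_nonneg_left hνlip (by positivity)
    have hlast : (((n:ℝ) * α) * (l * D)) ^ 2 ≤ (x / 5) * D ^ 2 := by
      have := mul_le_mul_of_nonneg_right hsq5 (sq_nonneg D)
      nlinarith [this]
    nlinarith [hexp, hIα, hν2, hlast]
  have hGlin : ‖G‖ ≤ (1 - (9/10) * x) * D := by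
    apply sq_le_imp (norm_nonneg G)
    · have : (0:ℝ) ≤ 1 - (9/10) * x := by linarith
      exact mul_nonneg this hD0
    · have hh : ((1 - (9/10) * x) * D) ^ 2 = (1 - (9/5) * x) * D ^ 2 + ((9/10) * x * D)^2 := by
        ring
      nlinarith [hG2, sq_nonneg ((9/10) * x * D)]
  -- linear bound on the epoch output
  have h3 : α * α * l * l * ((n:ℝ) * ((n:ℝ) - 1)) ≤ x / 5 := by
    nlinarith [hsq5, mul_nonneg (mul_nonneg (mul_nonneg hα0.le hα0.le)
      (mul_nonneg hl0.le hl0.le)) hn0.le]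
  have hZn : ‖Z n - zs‖ ≤ (1 - (31/40) * x) * D + (5/4) * α^2 * l * S := by
    rw [hdecomp]
    refine le_trans (norm_sub_le G r) ?_
    have h1 : ‖r‖ ≤ α * l * ((5/4) * (α * S + α * l * ((n:ℝ) * ((n:ℝ) - 1) / 2) * D)) :=
      le_trans hrb (mul_le_mul_of_nonneg_left hTb (by positivity))
    have h4 := mul_le_mul_of_nonneg_right h3 hD0
    have hr2 : ‖r‖ ≤ (5/4) * α^2 * l * S + (1/8) * x * D := by
      have e1 : α * l * ((5/4) * (α * S + α * l * ((n:ℝ) * ((n:ℝ) - 1) / 2) * D))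
          = (5/4) * α^2 * l * S + (5/8) * (α * α * l * l * ((n:ℝ) * ((n:ℝ) - 1)) * D) := by
        ring
      rw [e1] at h1
      linarith
    linarith [hGlin, hr2]
  -- squared recursion
  set B : ℝ := (5/4) * α^2 * l * S with hB
  have hB0 : 0 ≤ B := by
    rw [hB]
    have h25 : (0:ℝ) ≤ (5/4) * α^2 * l := by positivity
    exact mul_nonneg h25 hS0
  have hSsq : S^2 ≤ (n:ℝ) * ∑ p ∈ Finset.range n, (s p)^2 := by
    rw [hS]
    have hcs := sq_sum_le_card_mul_sum_sq (s := Finset.range n) (f := s)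
    simpa [Finset.card_range] using hcs
  have hB2 : B^2 ≤ (25/16) * α^4 * l^2 * ((n:ℝ) * ∑ p ∈ Finset.range n, (s p)^2) := by
    have hBe : B^2 = (25/16) * α^4 * l^2 * S^2 := by rw [hB]; ring
    rw [hBe]
    exact mul_le_mul_of_nonneg_left hSsq (by positivity)
  have hfinal := sq_step hx0 hx5 hD0 hB0 (norm_nonneg (Z n - zs)) hZn hB2
  have hsconv : ∑ p ∈ Finset.range n, ‖∑ t ∈ Finset.range p,
      (if h : t < n then ω (τ ⟨t, h⟩) zs else 0)‖ ^ 2 = ∑ p ∈ Finset.range n, (s p)^2 := by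
    apply Finset.sum_congr rfl
    intro p _
    rfl
  rw [hsconv]
  exact le_trans hfinal (le_of_eq (by ring))

/-- GDA with Shuffle Once: averaging over all `n!` permutations `τ`, used in every epoch,
the final epoch iterate satisfies
`E‖z^{K+1}₀ − z*‖² ≤ 2e^{−nαμK}‖z₀ − z*‖² + l²σ*²α³n²K/μ`. -/
theorem stmt_11
    {E : Type*} [NormedAddCommGroup E] [InnerProductSpace ℝ E] [FiniteDimensional ℝ E]
    (n : ℕ) (hn : 1 ≤ n) (ω : Fin n → E → E) (l μ : ℝ) (hμ : 0 < μ) (hμl : μ ≤ l)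
    (hlip : ∀ (i : Fin n) (z₁ z₂ : E), ‖ω i z₁ - ω i z₂‖ ≤ l * ‖z₁ - z₂‖)
    (ν : E → E) (hν : ∀ z, ν z = (n : ℝ)⁻¹ • ∑ i, ω i z)
    (hmono : ∀ z₁ z₂, ⟪ν z₁ - ν z₂, z₁ - z₂⟫ ≥ μ * ‖z₁ - z₂‖ ^ 2)
    (zs : E) (hzs : ν zs = 0)
    (σ2 : ℝ) (hσ2 : σ2 = (n : ℝ)⁻¹ * ∑ i, ‖ω i zs‖ ^ 2)
    (z0 : E) (K : ℕ) (hK : 1 ≤ K) (α : ℝ) (hα0 : 0 < α) (hα : α ≤ μ / (5 * n * l ^ 2)) :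
    ((n.factorial : ℝ))⁻¹ *
        ∑ τ : Equiv.Perm (Fin n),
          ‖gdaEpochs ω α (fun _ => τ) z0 K - zs‖ ^ 2
      ≤ 2 * Real.exp (-((n : ℝ) * α * μ * K)) * ‖z0 - zs‖ ^ 2 +
          l ^ 2 * σ2 * α ^ 3 * (n : ℝ) ^ 2 * K / μ := by
  have hl0 : 0 < l := lt_of_lt_of_le hμ hμl
  have hn0 : (0:ℝ) < (n:ℝ) := by exact_mod_cast hn
  have hF0 : (0:ℝ) < (n.factorial : ℝ) := by exact_mod_cast n.factorial_pos
  have hσ20 : 0 ≤ σ2 := by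
    rw [hσ2]
    positivity
  set x : ℝ := (n : ℝ) * α * μ with hxdef
  clear_value x
  have hx0 : 0 < x := by rw [hxdef]; positivity
  have hanl2 : α * ((n:ℝ) * l ^ 2) ≤ μ / 5 := by
    rw [le_div_iff₀ (by positivity)] at hα
    linarith [hα]
  have hx5 : x ≤ 1/5 := by
    rw [hxdef]
    have h1 : α * ((n:ℝ) * l ^ 2) * μ ≤ μ / 5 * μ := mul_le_mul_of_nonneg_right hanl2 hμ.le
    have h2 : μ * μ ≤ l * l := mul_le_mul hμl hμl hμ.le (le_of_lt hl0)
    nlinarith [h1, h2, mul_pos hl0 hl0]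
  have h1x : (0:ℝ) ≤ 1 - x := by linarith
  have hcx : 0 < (17/40) * x := by linarith
  -- the epoch coefficient
  set coef : ℝ := (1 + 1 / ((17/40) * x)) * (25/16) * α ^ 4 * l ^ 2 * (n:ℝ) with hcoefdef
  clear_value coef
  have hcoef0 : 0 ≤ coef := by
    rw [hcoefdef]
    have h1 : 0 < 1 / ((17/40) * x) := one_div_pos.mpr hcx
    have h2 : (0:ℝ) ≤ (25/16) * α ^ 4 * l ^ 2 * (n:ℝ) := by positivity
    nlinarith [h1, h2]
  -- epoch bound in folded form
  have hepoch : ∀ (τ : Equiv.Perm (Fin n)) (w : E),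
      ‖gdaStep ω α τ w n - zs‖ ^ 2
        ≤ (1 - x) * ‖w - zs‖ ^ 2
          + coef * ∑ p ∈ Finset.range n, ‖∑ t ∈ Finset.range p,
              (if h : t < n then ω (τ ⟨t, h⟩) zs else 0)‖ ^ 2 := by
    intro τ w
    have h := epoch_bound hn ω hμ hμl hlip ν hν hmono zs hzs hα0 hα τ w
    rw [← hxdef] at h
    refine le_trans h (le_of_eq ?_)
    rw [hcoefdef]
  have hSq0 : ∀ τ : Equiv.Perm (Fin n),
      (0:ℝ) ≤ ∑ p ∈ Finset.range n, ‖∑ t ∈ Finset.range p,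
          (if h : t < n then ω (τ ⟨t, h⟩) zs else 0)‖ ^ 2 :=
    fun τ => Finset.sum_nonneg fun p _ => by positivity
  -- unrolled recursion
  have hunroll : ∀ (τ : Equiv.Perm (Fin n)) (k : ℕ),
      ‖gdaEpochs ω α (fun _ => τ) z0 k - zs‖ ^ 2
        ≤ (1 - x) ^ k * ‖z0 - zs‖ ^ 2
          + (k:ℝ) * (coef * ∑ p ∈ Finset.range n, ‖∑ t ∈ Finset.range p,
              (if h : t < n then ω (τ ⟨t, h⟩) zs else 0)‖ ^ 2) := by
    intro τ k
    induction k with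
    | zero => simp [gdaEpochs]
    | succ k ih =>
      have hstep : gdaEpochs ω α (fun _ => τ) z0 (k+1)
          = gdaStep ω α τ (gdaEpochs ω α (fun _ => τ) z0 k) n := rfl
      rw [hstep]
      refine le_trans (hepoch τ _) ?_
      have h2 := mul_le_mul_of_nonneg_left ih h1x
      have hQn : 0 ≤ coef * ∑ p ∈ Finset.range n, ‖∑ t ∈ Finset.range p,
          (if h : t < n then ω (τ ⟨t, h⟩) zs else 0)‖ ^ 2 := mul_nonneg hcoef0 (hSq0 τ)
      have hkQ : 0 ≤ (k:ℝ) * (coef * ∑ p ∈ Finset.range n, ‖∑ t ∈ Finset.range p,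
          (if h : t < n then ω (τ ⟨t, h⟩) zs else 0)‖ ^ 2) := mul_nonneg (by positivity) hQn
      have e : (1 - x) * ((1 - x) ^ k * ‖z0 - zs‖ ^ 2
            + (k:ℝ) * (coef * ∑ p ∈ Finset.range n, ‖∑ t ∈ Finset.range p,
              (if h : t < n then ω (τ ⟨t, h⟩) zs else 0)‖ ^ 2))
          = (1 - x) ^ (k+1) * ‖z0 - zs‖ ^ 2
            + (1 - x) * ((k:ℝ) * (coef * ∑ p ∈ Finset.range n, ‖∑ t ∈ Finset.range p,
              (if h : t < n then ω (τ ⟨t, h⟩) zs else 0)‖ ^ 2)) := by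
        rw [pow_succ]
        ring
      rw [e] at h2
      have h3 : (1 - x) * ((k:ℝ) * (coef * ∑ p ∈ Finset.range n, ‖∑ t ∈ Finset.range p,
            (if h : t < n then ω (τ ⟨t, h⟩) zs else 0)‖ ^ 2))
          ≤ (k:ℝ) * (coef * ∑ p ∈ Finset.range n, ‖∑ t ∈ Finset.range p,
            (if h : t < n then ω (τ ⟨t, h⟩) zs else 0)‖ ^ 2) := by
        nlinarith [hkQ, hx0]
      push_cast
      linarith [h2, h3]
  -- expectation of the prefix sums
  have hy : ∑ i, ω i zs = 0 := by
    have h := hν zs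
    rw [hzs] at h
    have h2 := h.symm
    rcases smul_eq_zero.mp h2 with h3 | h3
    · exact absurd h3 (by positivity)
    · exact h3
  have hconv : ∀ (τ : Equiv.Perm (Fin n)) (p : ℕ), p ≤ n →
      ∑ t ∈ Finset.range p, (if h : t < n then ω (τ ⟨t, h⟩) zs else 0)
        = ∑ j ∈ (Finset.univ : Finset (Fin n)).filter (fun j : Fin n => (j : ℕ) < p),
            ω (τ j) zs := by
    intro τ p hp
    rw [Finset.sum_filter]
    have e1 : ∀ j : Fin n, (if (j:ℕ) < p then ω (τ j) zs else 0)
        = (fun t : ℕ => if h : t < n then (if t < p then ω (τ ⟨t, h⟩) zs else 0) else 0) (j:ℕ) := by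
      intro j
      simp only [dif_pos j.isLt, Fin.eta]
    rw [Finset.sum_congr rfl (fun j _ => e1 j),
      Fin.sum_univ_eq_sum_range (fun t => if h : t < n then (if t < p then ω (τ ⟨t, h⟩) zs else 0) else 0) n]
    rw [← Finset.sum_subset (Finset.range_subset_range.mpr hp) (by
      intro t _ htp
      have : ¬ t < p := by simpa using htp
      simp [this])]
    apply Finset.sum_congr rfl
    intro t ht
    have htp : t < p := Finset.mem_range.mp ht
    have htn : t < n := lt_of_lt_of_le htp hp
    simp [htn, htp]
  have hperm : ∑ τ : Equiv.Perm (Fin n), ∑ p ∈ Finset.range n,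
      ‖∑ t ∈ Finset.range p, (if h : t < n then ω (τ ⟨t, h⟩) zs else 0)‖ ^ 2
      ≤ (n.factorial : ℝ) * ((∑ i, ‖ω i zs‖ ^ 2) * n / 4) := by
    have he : ∀ τ : Equiv.Perm (Fin n), ∑ p ∈ Finset.range n,
        ‖∑ t ∈ Finset.range p, (if h : t < n then ω (τ ⟨t, h⟩) zs else 0)‖ ^ 2
        = ∑ p ∈ Finset.range n,
          ‖∑ j ∈ (Finset.univ : Finset (Fin n)).filter (fun j : Fin n => (j : ℕ) < p),
            (fun i => ω i zs) (τ j)‖ ^ 2 := by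
      intro τ
      apply Finset.sum_congr rfl
      intro p hp
      rw [hconv τ p (le_of_lt (Finset.mem_range.mp hp))]
    rw [Finset.sum_congr rfl (fun τ _ => he τ)]
    exact perm_prefix (fun i => ω i zs) hy
  -- sum the per-permutation bounds
  have htot : ∑ τ : Equiv.Perm (Fin n), ‖gdaEpochs ω α (fun _ => τ) z0 K - zs‖ ^ 2
      ≤ (n.factorial : ℝ) * ((1 - x) ^ K * ‖z0 - zs‖ ^ 2)
        + (K:ℝ) * coef * ((n.factorial : ℝ) * ((∑ i, ‖ω i zs‖ ^ 2) * n / 4)) := by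
    refine le_trans (Finset.sum_le_sum (fun τ _ => hunroll τ K)) ?_
    rw [Finset.sum_add_distrib, Finset.sum_const, Finset.card_univ, Fintype.card_perm,
      Fintype.card_fin, nsmul_eq_mul]
    have e2 : ∑ τ : Equiv.Perm (Fin n), (K:ℝ) * (coef * ∑ p ∈ Finset.range n,
        ‖∑ t ∈ Finset.range p, (if h : t < n then ω (τ ⟨t, h⟩) zs else 0)‖ ^ 2)
        = (K:ℝ) * coef * ∑ τ : Equiv.Perm (Fin n), ∑ p ∈ Finset.range n,
          ‖∑ t ∈ Finset.range p, (if h : t < n then ω (τ ⟨t, h⟩) zs else 0)‖ ^ 2 := by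
      rw [Finset.mul_sum]
      apply Finset.sum_congr rfl
      intro τ _
      ring
    rw [e2]
    have hKc : (0:ℝ) ≤ (K:ℝ) * coef := mul_nonneg (by positivity) hcoef0
    have := mul_le_mul_of_nonneg_left hperm hKc
    linarith
  -- exponential bound
  have hexp1 : (1 - x) ^ K ≤ Real.exp (-(x * (K:ℝ))) := by
    have h1 : 1 - x ≤ Real.exp (-x) := by
      have := Real.add_one_le_exp (-x)
      linarith
    have h2 : (1 - x) ^ K ≤ (Real.exp (-x)) ^ K := pow_le_pow_left₀ h1x h1 K
    have h3 : (Real.exp (-x)) ^ K = Real.exp (-(x * (K:ℝ))) := by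
      rw [← Real.exp_nat_mul]
      congr 1
      ring
    rw [← h3]
    exact h2
  -- key coefficient inequality
  have hM : (∑ i, ‖ω i zs‖ ^ 2) = (n:ℝ) * σ2 := by
    rw [hσ2]
    field_simp
  have hkey : coef * (((n:ℝ) * σ2) * n / 4) ≤ l ^ 2 * σ2 * α ^ 3 * (n:ℝ) ^ 2 / μ := by
    have hE : coef * (((n:ℝ) * σ2) * n / 4)
        = ((x + 40/17) * (25/64)) * (l ^ 2 * σ2 * α ^ 3 * (n:ℝ) ^ 2 / μ) := by
      rw [hcoefdef, hxdef]
      field_simp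
      ring
    have hfac : (x + 40/17) * (25/64) ≤ 1 := by nlinarith [hx5]
    have hpos2 : (0:ℝ) ≤ l ^ 2 * σ2 * α ^ 3 * (n:ℝ) ^ 2 / μ := by positivity
    rw [hE]
    nlinarith [hfac, hpos2]
  -- final assembly
  have hmulinv := mul_le_mul_of_nonneg_left htot (inv_nonneg.mpr hF0.le)
  refine le_trans hmulinv ?_
  have e3 : ((n.factorial : ℝ))⁻¹ * ((n.factorial : ℝ) * ((1 - x) ^ K * ‖z0 - zs‖ ^ 2)
      + (K:ℝ) * coef * ((n.factorial : ℝ) * ((∑ i, ‖ω i zs‖ ^ 2) * n / 4)))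
      = (1 - x) ^ K * ‖z0 - zs‖ ^ 2 + (K:ℝ) * (coef * (((n:ℝ) * σ2) * n / 4)) := by
    rw [hM]
    field_simp
  rw [e3]
  have hb1 : (1 - x) ^ K * ‖z0 - zs‖ ^ 2 ≤ 2 * Real.exp (-(x * (K:ℝ))) * ‖z0 - zs‖ ^ 2 := by
    have h1 := mul_le_mul_of_nonneg_right hexp1 (sq_nonneg ‖z0 - zs‖)
    nlinarith [Real.exp_pos (-(x * (K:ℝ))), sq_nonneg ‖z0 - zs‖, h1]
  have hb2 : (K:ℝ) * (coef * (((n:ℝ) * σ2) * n / 4))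
      ≤ l ^ 2 * σ2 * α ^ 3 * (n:ℝ) ^ 2 * (K:ℝ) / μ := by
    have h1 := mul_le_mul_of_nonneg_left hkey (by positivity : (0:ℝ) ≤ (K:ℝ))
    calc (K:ℝ) * (coef * (((n:ℝ) * σ2) * n / 4))
        ≤ (K:ℝ) * (l ^ 2 * σ2 * α ^ 3 * (n:ℝ) ^ 2 / μ) := h1
      _ = l ^ 2 * σ2 * α ^ 3 * (n:ℝ) ^ 2 * (K:ℝ) / μ := by ring
  linarith [hb1, hb2]
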